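/- arXiv:math/0309154 — 3 statements merged into one kernel-verified Lean document; each statement's English description precedes it below -/
import Mathlib

section
/- Let A ∈ ℤ^{d×n}. The Graver basis of the Lawrence lifting L(A) = [[A, 0],[Iₙ, Iₙ]] equals {(u, −u) : u ∈ G(A)}, where G(A) is the Graver basis of A. -/
open Matrix

/-- The partial order `⊑`: `u ⊑ v` iff componentwise `u j * v j ≥ 0` and `|u j| ≤ |v j|`. -/
def sqle {m : Type*} (u v : m → ℤ) : Prop :=
  ∀ j, 0 ≤ u j * v j ∧ |u j| ≤ |v j|

/-- The Graver basis of an integer matrix: the set of `⊑`-minimal nonzero integer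
vectors in its kernel. -/
def graverBasis {d m : Type*} [Fintype m] (M : Matrix d m ℤ) : Set (m → ℤ) :=
  {v | v ≠ 0 ∧ M.mulVec v = 0 ∧
    ∀ w : m → ℤ, w ≠ 0 → M.mulVec w = 0 → sqle w v → w = v}

/-!
The kernel of `L(A) = [[A, 0], [1, 1]]` consists of the vectors `(u, -u)` with `A u = 0`, and
`u ↦ (u, -u)` preserves and reflects both being zero and the order `⊑`. Hence this map carries the
`⊑`-minimal nonzero kernel vectors of `A` exactly onto those of `L(A)`.
-/

theorem graverBasis_eq_image {d e m k : Type*} [Fintype m] [Fintype k]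
    {M : Matrix d m ℤ} {N : Matrix e k ℤ} {φ : (m → ℤ) → (k → ℤ)}
    (hφ : Function.Injective φ) (hφ_zero : φ 0 = 0)
    (h_ker : ∀ w, N *ᵥ w = 0 ↔ ∃ u, M *ᵥ u = 0 ∧ φ u = w)
    (h_sqle : ∀ u v, sqle (φ u) (φ v) ↔ sqle u v) :
    graverBasis N = φ '' graverBasis M := by
  have h_ne : ∀ u, φ u ≠ 0 ↔ u ≠ 0 := fun u => (hφ.eq_iff' hφ_zero).not
  ext w
  constructor
  · rintro ⟨hw, hNw, hmin⟩
    obtain ⟨u, hMu, rfl⟩ := (h_ker w).1 hNw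
    refine ⟨u, ⟨(h_ne u).1 hw, hMu, fun v hv hMv hvu => hφ ?_⟩, rfl⟩
    exact hmin (φ v) ((h_ne v).2 hv) ((h_ker _).2 ⟨v, hMv, rfl⟩) ((h_sqle v u).2 hvu)
  · rintro ⟨u, ⟨hu, hMu, hmin⟩, rfl⟩
    refine ⟨(h_ne u).2 hu, (h_ker _).2 ⟨u, hMu, rfl⟩, fun z hz hNz hzu => ?_⟩
    obtain ⟨v, hMv, rfl⟩ := (h_ker z).1 hNz
    rw [hmin v ((h_ne v).1 hz) hMv ((h_sqle v u).1 hzu)]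

section Lawrence

variable {d m R : Type*}

theorem sumElim_neg_injective [Neg R] :
    Function.Injective fun u : m → R => Sum.elim u (-u) :=
  fun _ _ h => congrArg (· ∘ Sum.inl) h

theorem fromBlocks_zero_one_one_mulVec_eq_zero_iff [Fintype m] [DecidableEq m] [Ring R]
    (A : Matrix d m R) (w : m ⊕ m → R) :
    fromBlocks A 0 (1 : Matrix m m R) 1 *ᵥ w = 0 ↔ ∃ u, A *ᵥ u = 0 ∧ Sum.elim u (-u) = w := by
  rw [← Sum.elim_comp_inl_inr w, fromBlocks_mulVec]
  simp only [zero_mulVec, one_mulVec, add_zero, Sum.elim_comp_inl, Sum.elim_comp_inr,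
    ← Sum.elim_zero_zero, Sum.elim_eq_iff, add_eq_zero_iff_neg_eq]
  exact ⟨fun ⟨hA, h⟩ => ⟨_, hA, rfl, h⟩, fun ⟨_, hA, rfl, h⟩ => ⟨hA, h⟩⟩

theorem sqle_sumElim_neg_iff (u v : m → ℤ) :
    sqle (Sum.elim u (-u)) (Sum.elim v (-v)) ↔ sqle u v := by
  simp [sqle, Sum.forall, abs_neg]

end Lawrence

theorem graver_lawrence_lifting (d n : ℕ) (A : Matrix (Fin d) (Fin n) ℤ) :
    graverBasis (Matrix.fromBlocks A 0 (1 : Matrix (Fin n) (Fin n) ℤ) 1) =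
      {w | ∃ u ∈ graverBasis A, w = Sum.elim u (-u)} := by
  rw [graverBasis_eq_image sumElim_neg_injective (by simp)
    (fromBlocks_zero_one_one_mulVec_eq_zero_iff A) sqle_sumElim_neg_iff]
  simp only [Set.image, eq_comm]
end

section
/- For u, v ∈ ℤⁿ and scalars p, q ∈ ℤ: (u, p, q) is ⊑-minimal in ker(A a a) if and only if (u, p, −q) is ⊑-minimal in ker(A a −a). -/
open Matrix

/-- `v` is a `⊑`-minimal nonzero element of the kernel of `M`. -/
def IsGraverElem {d m : Type*} [Fintype m] (M : Matrix d m ℤ) (v : m → ℤ) : Prop :=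
  v ≠ 0 ∧ M.mulVec v = 0 ∧
    ∀ w : m → ℤ, w ≠ 0 → M.mulVec w = 0 → sqle w v → w = v

def flipLast {n : ℕ} (w : Fin n ⊕ Fin 2 → ℤ) : Fin n ⊕ Fin 2 → ℤ :=
  Sum.elim (fun j => w (.inl j)) ![w (.inr 0), -w (.inr 1)]

lemma flipLast_flipLast {n : ℕ} (w : Fin n ⊕ Fin 2 → ℤ) : flipLast (flipLast w) = w := by
  funext j
  cases j with
  | inl j => rfl
  | inr j => fin_cases j <;> simp [flipLast]

lemma flipLast_elim {n : ℕ} (u : Fin n → ℤ) (p q : ℤ) :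
    flipLast (Sum.elim u ![p, q]) = Sum.elim u ![p, -q] := by
  funext j
  cases j with
  | inl j => rfl
  | inr j => fin_cases j <;> simp [flipLast]

lemma flipLast_ne_zero {n : ℕ} {w : Fin n ⊕ Fin 2 → ℤ} (h : w ≠ 0) : flipLast w ≠ 0 := by
  intro h0
  apply h
  have := congrArg flipLast h0
  rw [flipLast_flipLast] at this
  rw [this]
  funext j
  cases j with
  | inl j => rfl
  | inr j => fin_cases j <;> simp [flipLast]

lemma sqle_flipLast {n : ℕ} {w v : Fin n ⊕ Fin 2 → ℤ} (h : sqle w v) :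
    sqle (flipLast w) (flipLast v) := by
  intro j
  cases j with
  | inl j => exact h (.inl j)
  | inr j =>
    fin_cases j
    · exact h (.inr 0)
    · have := h (.inr 1)
      simp [flipLast]
      constructor
      · nlinarith [this.1]
      · exact this.2

lemma mulVec_flipLast {d n : ℕ} (A : Matrix (Fin d) (Fin n) ℤ) (b c : Fin d → ℤ)
    (w : Fin n ⊕ Fin 2 → ℤ) :
    (Matrix.of fun i => Sum.elim (A i) ![b i, -c i]).mulVec (flipLast w) =
      (Matrix.of fun i => Sum.elim (A i) ![b i, c i]).mulVec w := by
  funext i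
  simp only [mulVec, dotProduct, Fintype.sum_sum_type, Fin.sum_univ_two]
  simp [flipLast]

lemma graver_flip {d n : ℕ} (A : Matrix (Fin d) (Fin n) ℤ) (b c : Fin d → ℤ)
    (v : Fin n ⊕ Fin 2 → ℤ)
    (h : IsGraverElem (Matrix.of fun i => Sum.elim (A i) ![b i, c i]) v) :
    IsGraverElem (Matrix.of fun i => Sum.elim (A i) ![b i, -c i]) (flipLast v) := by
  obtain ⟨hv0, hker, hmin⟩ := h
  refine ⟨flipLast_ne_zero hv0, ?_, ?_⟩
  · rw [mulVec_flipLast, hker]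
  · intro w hw0 hwker hsq
    have h1 : (Matrix.of fun i => Sum.elim (A i) ![b i, c i]).mulVec (flipLast w) = 0 := by
      have := mulVec_flipLast A b (-c) w
      simp only [Pi.neg_apply, neg_neg] at this
      rw [this, hwker]
    have h2 : sqle (flipLast w) v := by
      have := sqle_flipLast hsq
      rwa [flipLast_flipLast] at this
    have := hmin (flipLast w) (flipLast_ne_zero hw0) h1 h2
    have := congrArg flipLast this
    rwa [flipLast_flipLast] at this

theorem graver_elem_flip_sign_iff (d n : ℕ) (A : Matrix (Fin d) (Fin n) ℤ)
    (a : Fin d → ℤ) (u : Fin n → ℤ) (p q : ℤ) :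
    IsGraverElem (Matrix.of fun i => Sum.elim (A i) ![a i, a i]) (Sum.elim u ![p, q]) ↔
      IsGraverElem (Matrix.of fun i => Sum.elim (A i) ![a i, -a i]) (Sum.elim u ![p, -q]) := by
  constructor
  · intro h
    have := graver_flip A a a _ h
    rwa [flipLast_elim] at this
  · intro h
    have := graver_flip A a (fun i => -a i) _ h
    rw [flipLast_elim] at this
    simp only [neg_neg] at this
    exact this
end

section
/- Let g : ℤ → ℝ be Z-convex with minimum at 0, p ∈ ℤ, and k ≥ |p|. Consider minimizing Σ_{j=1}^k (g(j)−g(j−1))x_j + (g(−j)−g(−j+1))y_j over x_j, y_j ∈ {0,1} subject to p = Σ x_j − Σ y_j. Then the optimal value is g(p) − g(0), attained by x_1=…=x_p=1 (rest 0) if p>0, all zero if p=0, and y_1=…=y_{−p}=1 (rest 0) if p<0. -/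
open Finset


lemma sumIte {M : Type*} [AddCommMonoid M] (k m : ℕ) (hm : m ≤ k) (f : ℕ → M) :
    ∑ j : Fin k, (if (j:ℕ) < m then f j else 0) = ∑ i ∈ Finset.range m, f i := by
  rw [Fin.sum_univ_eq_sum_range (fun j => if j < m then f j else 0)]
  have : ∀ j, (if j < m then f j else 0) = (if j ∈ Finset.range m then f j else 0) := by
    intro j; simp [Finset.mem_range]
  simp_rw [this]
  rw [Finset.sum_ite_mem, Finset.inter_comm, Finset.inter_eq_left.mpr (Finset.range_subset_range.mpr hm)]

-- telescoping
lemma tel (g : ℤ → ℝ) (s : ℤ) (n : ℕ) :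
    g (s + n) - g s = ∑ i ∈ Finset.range n, (g (s + i + 1) - g (s + i)) := by
  induction n with
  | zero => simp
  | succ n ih => rw [Finset.sum_range_succ, ← ih]; push_cast; ring_nf

lemma rearr {k : ℕ} (d : ℕ → ℝ) (hd : Monotone d) (x : Fin k → ℤ)
    (hx : ∀ j, x j = 0 ∨ x j = 1) :
    ∑ i ∈ Finset.range (∑ j, x j).toNat, d i ≤ ∑ j : Fin k, d j * (x j : ℝ) := by
  set a : ℕ := (∑ j, x j).toNat with ha
  have hx0 : ∀ j, (0:ℤ) ≤ x j := fun j => by rcases hx j with h | h <;> simp [h]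
  have hx1 : ∀ j, x j ≤ 1 := fun j => by rcases hx j with h | h <;> simp [h]
  have hsa : (∑ j, x j) = (a : ℤ) := by
    rw [ha, Int.toNat_of_nonneg (Finset.sum_nonneg fun j _ => hx0 j)]
  have hak : a ≤ k := by
    have : (∑ j, x j) ≤ (k : ℤ) := by
      calc (∑ j, x j) ≤ ∑ _j : Fin k, (1:ℤ) := Finset.sum_le_sum fun j _ => hx1 j
        _ = k := by simp
    omega
  -- χ j = if j < a then 1 else 0
  have key : ∀ j : Fin k, 0 ≤ (d j - d a) * ((x j : ℝ) - (if (j:ℕ) < a then 1 else 0)) := by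
    intro j
    by_cases h : (j:ℕ) < a
    · simp only [h, if_pos]
      have h1 : d j ≤ d a := hd h.le
      have h2 : (x j : ℝ) ≤ 1 := by exact_mod_cast hx1 j
      nlinarith
    · simp only [h, if_neg, not_false_iff]
      have h1 : d a ≤ d j := hd (le_of_not_gt h)
      have h2 : (0:ℝ) ≤ (x j : ℝ) := by exact_mod_cast hx0 j
      nlinarith
  have hsum : 0 ≤ ∑ j : Fin k, (d j - d a) * ((x j : ℝ) - (if (j:ℕ) < a then 1 else 0)) :=
    Finset.sum_nonneg fun j _ => key j
  have hchi : ∑ j : Fin k, (if (j:ℕ) < a then (1:ℝ) else 0) = a := by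
    have := sumIte k a hak (fun _ => (1:ℝ)); simpa using this
  have hdchi : ∑ j : Fin k, (if (j:ℕ) < a then d j else 0) = ∑ i ∈ Finset.range a, d i :=
    sumIte k a hak d
  have hxa : ∑ j : Fin k, (x j : ℝ) = a := by
    rw [← Int.cast_sum] ; rw [hsa]; simp
  have expand : ∑ j : Fin k, (d j - d a) * ((x j : ℝ) - (if (j:ℕ) < a then 1 else 0))
      = (∑ j : Fin k, d j * (x j : ℝ)) - (∑ j : Fin k, (if (j:ℕ) < a then d j else 0))
        - d a * (∑ j : Fin k, (x j : ℝ)) + d a * (∑ j : Fin k, (if (j:ℕ) < a then (1:ℝ) else 0)) := by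
    calc ∑ j : Fin k, (d j - d a) * ((x j : ℝ) - (if (j:ℕ) < a then 1 else 0))
        = ∑ j : Fin k, ((d j * (x j : ℝ) - (if (j:ℕ) < a then d j else 0))
            - d a * (x j : ℝ) + d a * (if (j:ℕ) < a then (1:ℝ) else 0)) := by
          apply Finset.sum_congr rfl
          intro j _
          by_cases h : (j:ℕ) < a <;> simp [h] <;> ring
      _ = _ := by
          rw [Finset.sum_add_distrib, Finset.sum_sub_distrib, Finset.sum_sub_distrib,
            ← Finset.mul_sum, ← Finset.mul_sum]
  rw [expand, hchi, hxa, hdchi] at hsum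
  linarith

lemma telD (g : ℤ → ℝ) (n : ℕ) :
    ∑ i ∈ Finset.range n, (g ((i:ℤ) + 1) - g (i:ℤ)) = g n - g 0 := by
  have := tel g 0 n
  simp only [zero_add] at this
  rw [← this]

lemma telE (g : ℤ → ℝ) (n : ℕ) :
    ∑ i ∈ Finset.range n, (g (-((i:ℤ) + 1)) - g (-(i:ℤ))) = g (-(n:ℤ)) - g 0 := by
  induction n with
  | zero => simp
  | succ n ih => rw [Finset.sum_range_succ, ih]; push_cast; ring_nf

lemma convexKey (g : ℤ → ℝ) (hg : Monotone (fun x : ℤ => g (x + 1) - g x))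
    (a b : ℕ) : g ((a:ℤ) - b) + g 0 ≤ g a + g (-(b:ℤ)) := by
  have hp : (a:ℤ) - b = (a:ℤ) - b := rfl
  have h1 : g ((a:ℤ)) - g ((a:ℤ)-b) = ∑ i ∈ Finset.range b, (g (((a:ℤ)-b) + i + 1) - g (((a:ℤ)-b) + i)) := by
    have h : (a:ℤ)-b + b = a := by ring
    have := tel g ((a:ℤ)-b) b; rw [h] at this; rw [← this]
  have h2 : g 0 - g (-(b:ℤ)) = ∑ i ∈ Finset.range b, (g (-(b:ℤ) + i + 1) - g (-(b:ℤ) + i)) := by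
    have h : -(b:ℤ) + b = 0 := by ring
    have := tel g (-(b:ℤ)) b; rw [h] at this; rw [← this]
  have hle : ∀ i ∈ Finset.range b, (g (-(b:ℤ) + i + 1) - g (-(b:ℤ) + i)) ≤ (g (((a:ℤ)-b) + i + 1) - g (((a:ℤ)-b) + i)) := by
    intro i _
    have hpb : -(b:ℤ) + i ≤ ((a:ℤ)-b) + i := by
      have : (0:ℤ) ≤ a := Int.ofNat_nonneg a
      omega
    have := hg hpb
    simpa using this
  have := Finset.sum_le_sum hle
  rw [← h1, ← h2] at this
  linarith

/-- `g : ℤ → ℝ` is `ℤ`-convex with minimum at `α`. -/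
def ZConvexAt (g : ℤ → ℝ) (α : ℤ) : Prop :=
  Monotone (fun x : ℤ => g (x + 1) - g x) ∧
  (∀ x : ℤ, x < α → g (x + 1) - g x ≤ 0) ∧
  (∀ x : ℤ, α ≤ x → 0 ≤ g (x + 1) - g x)

/-- Objective function of the auxiliary 0-1 problem:
the summand indexed by `j : Fin k` corresponds to `j+1 ∈ {1, …, k}`. -/
noncomputable def auxObj (g : ℤ → ℝ) (k : ℕ) (x y : Fin k → ℤ) : ℝ :=
  ∑ j : Fin k, ((g ((j : ℤ) + 1) - g (j : ℤ)) * (x j : ℝ) +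
    (g (-((j : ℤ) + 1)) - g (-(j : ℤ))) * (y j : ℝ))

theorem optimal_solution_one_function (g : ℤ → ℝ) (hg : ZConvexAt g 0)
    (p : ℤ) (k : ℕ) (hk : |p| ≤ (k : ℤ)) :
    -- the explicit candidate solution: `x_1 = … = x_p = 1` (rest `0`) if `p > 0`,
    -- everything `0` if `p = 0`, and `y_1 = … = y_{-p} = 1` (rest `0`) if `p < 0`
    (∑ j : Fin k, (if (j : ℤ) < p then (1 : ℤ) else 0)) -
        (∑ j : Fin k, (if (j : ℤ) < -p then (1 : ℤ) else 0)) = p ∧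
    auxObj g k (fun j => if (j : ℤ) < p then 1 else 0)
        (fun j => if (j : ℤ) < -p then 1 else 0) = g p - g 0 ∧
    ∀ x y : Fin k → ℤ, (∀ j, x j = 0 ∨ x j = 1) → (∀ j, y j = 0 ∨ y j = 1) →
      (∑ j, x j) - (∑ j, y j) = p → g p - g 0 ≤ auxObj g k x y := by
  obtain ⟨hmono, -, -⟩ := hg
  obtain ⟨hk1, hk2⟩ : -(k:ℤ) ≤ p ∧ p ≤ (k:ℤ) := abs_le.mp hk
  have hDmono : Monotone (fun n : ℕ => g ((n:ℤ) + 1) - g (n:ℤ)) := by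
    intro m n h
    exact hmono (by exact_mod_cast h)
  have hEmono : Monotone (fun n : ℕ => g (-((n:ℤ) + 1)) - g (-(n:ℤ))) := by
    intro m n h
    have h2 := hmono (show -((n:ℤ)+1) ≤ -((m:ℤ)+1) by
      have : (m:ℤ) ≤ n := by exact_mod_cast h
      linarith)
    simp only at h2 ⊢
    have e1 : -((n:ℤ)+1) + 1 = -(n:ℤ) := by ring
    have e2 : -((m:ℤ)+1) + 1 = -(m:ℤ) := by ring
    rw [e1, e2] at h2
    linarith
  -- count lemma
  have count : ∀ q : ℤ, q ≤ (k:ℤ) →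
      (∑ j : Fin k, (if (j : ℤ) < q then (1 : ℤ) else 0)) = max q 0 := by
    intro q hq
    have hpt : ∀ j : Fin k, (if (j:ℤ) < q then (1:ℤ) else 0)
        = (if (j:ℕ) < q.toNat then (1:ℤ) else 0) := by
      intro j
      by_cases h' : (j:ℕ) < q.toNat
      · rw [if_pos h', if_pos (Int.lt_toNat.mp h')]
      · rw [if_neg h', if_neg (fun hh => h' (Int.lt_toNat.mpr hh))]
    rw [Finset.sum_congr rfl (fun j _ => hpt j)]
    have hqk : q.toNat ≤ k := by omega
    have := sumIte k q.toNat hqk (fun _ => (1:ℤ))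
    rw [this]
    simp only [Finset.sum_const, Finset.card_range, nsmul_eq_mul, mul_one]
    omega
  refine ⟨?_, ?_, ?_⟩
  · rw [count p (by omega), count (-p) (by omega)]; omega
  · -- value of the candidate
    have hDpt : ∀ j : Fin k, (g ((j:ℤ)+1) - g (j:ℤ)) * (((if (j:ℤ) < p then (1:ℤ) else 0) : ℤ) : ℝ)
        = (if (j:ℕ) < p.toNat then (g ((j:ℤ)+1) - g (j:ℤ)) else 0) := by
      intro j
      by_cases h' : (j:ℕ) < p.toNat
      · rw [if_pos h', if_pos (Int.lt_toNat.mp h')]; simp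
      · rw [if_neg h', if_neg (fun hh => h' (Int.lt_toNat.mpr hh))]; simp
    have hEpt : ∀ j : Fin k, (g (-((j:ℤ)+1)) - g (-(j:ℤ))) * (((if (j:ℤ) < -p then (1:ℤ) else 0) : ℤ) : ℝ)
        = (if (j:ℕ) < (-p).toNat then (g (-((j:ℤ)+1)) - g (-(j:ℤ))) else 0) := by
      intro j
      by_cases h' : (j:ℕ) < (-p).toNat
      · rw [if_pos h', if_pos (Int.lt_toNat.mp h')]; simp
      · rw [if_neg h', if_neg (fun hh => h' (Int.lt_toNat.mpr hh))]; simp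
    unfold auxObj
    rw [Finset.sum_add_distrib]
    rw [Finset.sum_congr rfl (fun j _ => hDpt j), Finset.sum_congr rfl (fun j _ => hEpt j)]
    have hDk : p.toNat ≤ k := by omega
    have hEk : (-p).toNat ≤ k := by omega
    rw [sumIte k p.toNat hDk (fun n => g ((n:ℤ)+1) - g (n:ℤ)),
      sumIte k (-p).toNat hEk (fun n => g (-((n:ℤ)+1)) - g (-(n:ℤ))), telD, telE]
    rcases le_or_gt 0 p with h | h
    · rw [Int.toNat_of_nonneg h]
      have : ((-p).toNat : ℤ) = 0 := by omega
      rw [this]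
      norm_num
    · have h1 : (p.toNat : ℤ) = 0 := by omega
      have h2 : -(((-p).toNat : ℤ)) = p := by omega
      rw [h1, h2]
      norm_num
  · -- optimality
    intro x y hx hy hsum
    have hx0 : ∀ j, (0:ℤ) ≤ x j := fun j => by rcases hx j with h | h <;> simp [h]
    have hy0 : ∀ j, (0:ℤ) ≤ y j := fun j => by rcases hy j with h | h <;> simp [h]
    set a : ℕ := (∑ j, x j).toNat with ha
    set b : ℕ := (∑ j, y j).toNat with hb
    have hsa : (∑ j, x j) = (a : ℤ) :=
      (Int.toNat_of_nonneg (Finset.sum_nonneg fun j _ => hx0 j)).symm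
    have hsb : (∑ j, y j) = (b : ℤ) :=
      (Int.toNat_of_nonneg (Finset.sum_nonneg fun j _ => hy0 j)).symm
    have hp : (a:ℤ) - b = p := by rw [← hsa, ← hsb]; exact hsum
    have h1 := rearr (fun n => g ((n:ℤ)+1) - g (n:ℤ)) hDmono x hx
    have h2 := rearr (fun n => g (-((n:ℤ)+1)) - g (-(n:ℤ))) hEmono y hy
    rw [← ha] at h1
    rw [← hb] at h2
    rw [telD] at h1
    rw [telE] at h2
    have h3 := convexKey g hmono a b
    rw [hp] at h3
    unfold auxObj
    rw [Finset.sum_add_distrib]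
    linarith
end
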